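/- arXiv:2009.05374 — 2 statements merged into one kernel-verified Lean document; each statement's English description precedes it below -/
import Mathlib

section
/- Let (P,𝓜) be a refined pircon with rank function ρ, and let (R^q_{u,w}) and (R^{−1}_{u,w}) be its Kazhdan–Lusztig R^x-polynomials for x = q and x = −1 (both with respect to the same refinement 𝓜). Then for all u, w ∈ P with u ≤ w: (1) deg R^{−1}_{u,w} = ρ(u,w); (2) R^q_{u,w}(0) = (−1)^{ρ(u,w)}; (3) R^x_{u,w}(q) = (−q)^{ρ(u,w)} · R^z_{u,w}(q^{−1}) in ℤ[q,q^{−1}], where {x,z} = {q,−1}. -/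
open Polynomial LaurentPolynomial

/-- A quasi special partial matching of the order ideal `P_{≤w}`. -/
def IsQSPMOn {P : Type*} [PartialOrder P] (w : P) (M : P → P) : Prop :=
  (∀ u : P, u ≤ w → M u ≤ w) ∧
  (∀ u : P, u ≤ w → M (M u) = u) ∧
  (∀ u : P, u ≤ w → M u ⋖ u ∨ M u = u ∨ u ⋖ M u) ∧
  ∀ u t : P, u ≤ w → t ≤ w → u ⋖ t → M u ≠ t → M u < M t

/-- A special partial matching of the order ideal `P_{≤w}` (whose maximum is `w`). -/
def IsSPMOn {P : Type*} [PartialOrder P] (w : P) (M : P → P) : Prop :=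
  IsQSPMOn w M ∧ M w ⋖ w

/-- A pircon: for every non-minimal `x`, the order ideal `P_{≤x}` is finite and admits
a special partial matching. -/
def IsPircon (P : Type*) [PartialOrder P] : Prop :=
  ∀ x : P, ¬ IsMin x → (Set.Iic x).Finite ∧ ∃ M : P → P, IsSPMOn x M

/-- The family of Kazhdan--Lusztig `R^x`-polynomials of a refined pircon `(P, 𝓜)`,
where `MM w` is the chosen special partial matching of `P_{≤w}` for `w ≠ ⊥`, and
`x ∈ {q, -1} ⊆ ℤ[q]` (here `q` is the polynomial variable `X`). -/
def IsRefinedKLR {P : Type*} [PartialOrder P] [OrderBot P] (MM : P → P → P)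
    (x : Polynomial ℤ) (R : P → P → Polynomial ℤ) : Prop :=
  (∀ u w : P, ¬ u ≤ w → R u w = 0) ∧
  (∀ w : P, R w w = 1) ∧
  ∀ w : P, w ≠ ⊥ → ∀ u : P, u ≤ w →
    (MM w u ⋖ u → R u w = R (MM w u) (MM w w)) ∧
    (u ⋖ MM w u → R u w = (X - 1) * R u (MM w w) + X * R (MM w u) (MM w w)) ∧
    (MM w u = u → R u w = (X - 1 - x) * R u (MM w w))

/-!
The key fact is the lifting property of a special partial matching `M` of `P_{≤w}`: for
`u ≤ w`, `u ≤ M u` implies `u ≤ M w` and `M u < u` implies `M u ≤ M w`; it is proved by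
downward induction on `u`, passing to a cover `u ⋖ t ≤ w`. It guarantees that every polynomial
on the right-hand side of the recursion for `R_{u,w}` is indexed by a pair `a ≤ M w`, where
`ρ (M w) = ρ w - 1`, so all claims follow by induction on `w` with a three-way case split on `u`
versus `M u`. The two duality identities are equivalent because `invert` is an involution
sending `-T 1` to its inverse.
-/

theorem exists_covBy_le_of_lt_of_finite_Icc {P : Type*} [PartialOrder P] {a b : P}
    (hfin : (Set.Icc a b).Finite) (h : a < b) : ∃ x, a ⋖ x ∧ x ≤ b := by
  obtain ⟨x, hx, hmin⟩ :=
    (hfin.subset Set.Ioc_subset_Icc_self).exists_minimal ⟨b, h, le_rfl⟩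
  exact ⟨x, ⟨hx.1, fun c hac hcx ↦ hcx.not_ge <| hmin ⟨hac, hcx.le.trans hx.2⟩ hcx.le⟩,
    hx.2⟩

theorem IsPircon.finite_Iic {P : Type*} [PartialOrder P] (hP : IsPircon P) (x : P) :
    (Set.Iic x).Finite := by
  by_cases hx : IsMin x
  · simp [hx.Iic_eq]
  · exact (hP x hx).1

namespace IsSPMOn

variable {P : Type*} [PartialOrder P] {w : P} {M : P → P}

theorem lifting (hM : IsSPMOn w M) (hfin : (Set.Iic w).Finite) {u : P} (huw : u ≤ w) :
    (u ≤ M u → u ≤ M w) ∧ (M u < u → M u ≤ M w) := by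
  obtain ⟨⟨-, hMinv, hMtri, hMcov⟩, hMw⟩ := hM
  refine (hfin.wellFoundedOn (r := (· > ·))).induction huw
    (P := fun u => (u ≤ M u → u ≤ M w) ∧ (M u < u → M u ≤ M w)) fun u huw IH => ?_
  rcases huw.eq_or_lt with rfl | hlt
  · exact ⟨fun h => (hMw.lt.not_ge h).elim, fun _ => le_rfl⟩
  obtain ⟨t, hut, htw⟩ := exists_covBy_le_of_lt_of_finite_Icc
    (hfin.subset Set.Icc_subset_Iic_self) hlt
  obtain ⟨IH₁, IH₂⟩ := IH t htw hut.lt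
  have hMt : M t ≤ M w ∨ t ≤ M w := by
    rcases hMtri t htw with h | h | h
    exacts [.inl (IH₂ h.lt), .inr (IH₁ h.ge), .inr (IH₁ h.le)]
  have hMut : M u ≠ t → M u < M t := hMcov u t huw htw hut
  constructor
  · intro hu
    by_cases hut' : M u = t
    · have htu : M t = u := by rw [← hut', hMinv u huw]
      exact htu ▸ IH₂ (htu ▸ hut.lt)
    · rcases hMt with h | h
      exacts [(hu.trans_lt ((hMut hut').trans_le h)).le, hut.le.trans h]
  · intro hu
    rcases hMt with h | h
    exacts [((hMut (hu.trans hut.lt).ne).trans_le h).le, (hu.trans hut.lt).le.trans h]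

end IsSPMOn

-- `(P, MM)` is a refined pircon graded by `ρ`.
structure IsRankedRefinement {P : Type*} [PartialOrder P] [OrderBot P] (ρ : P → ℕ)
    (MM : P → P → P) : Prop where
  finite_Iic : ∀ w : P, (Set.Iic w).Finite
  rank_covBy : ∀ {a b : P}, a ⋖ b → ρ b = ρ a + 1
  isSPMOn : ∀ w : P, w ≠ ⊥ → IsSPMOn w (MM w)

namespace IsRankedRefinement

variable {P : Type*} [PartialOrder P] [OrderBot P] {ρ : P → ℕ} {MM : P → P → P}
  {R Rq Rm : P → P → ℤ[X]}

theorem strictMono (h : IsRankedRefinement ρ MM) : StrictMono ρ := by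
  let := LocallyFiniteOrder.ofFiniteIcc fun a b =>
    (h.finite_Iic b).subset (Set.Icc_subset_Iic_self (a := a))
  exact (strictMono_iff_forall_covBy ρ).2 fun a b hab => by rw [h.rank_covBy hab]; omega

theorem descent (h : IsRankedRefinement ρ MM) {u w : P} (hw : w ≠ ⊥) (huw : u ≤ w) :
    (MM w u ⋖ u ∧ MM w u ≤ MM w w) ∨ (MM w u = u ∧ u ≤ MM w w) ∨
      (u ⋖ MM w u ∧ u ≤ MM w w) := by
  have hM := h.isSPMOn w hw
  obtain ⟨lift₁, lift₂⟩ := hM.lifting (h.finite_Iic w) huw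
  rcases hM.1.2.2.1 u huw with hc | hc | hc
  exacts [.inl ⟨hc, lift₂ hc.lt⟩, .inr (.inl ⟨hc, lift₁ hc.ge⟩),
    .inr (.inr ⟨hc, lift₁ hc.le⟩)]

@[elab_as_elim]
theorem le_induction (h : IsRankedRefinement ρ MM) {Q : P → P → Prop} (bot : Q ⊥ ⊥)
    (step : ∀ w, w ≠ ⊥ → ∀ u ≤ w, (∀ a ≤ MM w w, Q a (MM w w)) → Q u w)
    {u w : P} (huw : u ≤ w) : Q u w := by
  have := h.strictMono.wellFoundedLT
  induction w using WellFoundedLT.induction generalizing u with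
  | _ w IH =>
    rcases eq_or_ne w ⊥ with rfl | hw
    · rwa [le_bot_iff.1 huw]
    · exact step w hw u huw fun a ha => IH _ (h.isSPMOn w hw).2.lt ha


theorem degree_eq (h : IsRankedRefinement ρ MM) (hR : IsRefinedKLR MM (-1) R) {u w : P}
    (huw : u ≤ w) : (R u w).degree = ((ρ w - ρ u : ℕ) : WithBot ℕ) := by
  refine h.le_induction (by simp [hR.2.1]) (fun w hw u huw IH => ?_) huw
  have hρw := h.rank_covBy (h.isSPMOn w hw).2
  have hrec := hR.2.2 w hw u huw
  rcases h.descent hw huw with ⟨hc, hle⟩ | ⟨hc, hle⟩ | ⟨hc, hle⟩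
  · have := h.rank_covBy hc
    rw [hrec.1 hc, IH _ hle]
    congr 1
    omega
  · have := h.strictMono.monotone hle
    rw [hrec.2.2 hc, sub_neg_eq_add, sub_add_cancel, degree_mul, degree_X, IH _ hle]
    norm_cast
    omega
  · have hρu := h.strictMono.monotone hle
    have hρMu := h.rank_covBy hc
    have hsmall : (X * R (MM w u) (MM w w)).degree < ((ρ w - ρ u : ℕ) : WithBot ℕ) := by
      by_cases hMu : MM w u ≤ MM w w
      · have hρMu' := h.strictMono.monotone hMu
        rw [degree_mul, degree_X, IH _ hMu]
        norm_cast
        omega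
      · simp [hR.1 _ _ hMu]
    have hdeg : ((X - 1) * R u (MM w w)).degree = ((ρ w - ρ u : ℕ) : WithBot ℕ) := by
      have hX1 : (X - 1 : ℤ[X]).degree = 1 := by simpa using degree_X_sub_C (1 : ℤ)
      rw [degree_mul, hX1, IH _ hle]
      norm_cast
      omega
    rw [hrec.2.1 hc, degree_add_eq_left_of_degree_lt (hdeg ▸ hsmall), hdeg]

theorem eval_zero_eq (h : IsRankedRefinement ρ MM) (hR : IsRefinedKLR MM X R) {u w : P}
    (huw : u ≤ w) : (R u w).eval 0 = (-1) ^ (ρ w - ρ u) := by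
  refine h.le_induction (by simp [hR.2.1]) (fun w hw u huw IH => ?_) huw
  have hρw := h.rank_covBy (h.isSPMOn w hw).2
  have hrec := hR.2.2 w hw u huw
  rcases h.descent hw huw with ⟨hc, hle⟩ | ⟨hc, hle⟩ | ⟨hc, hle⟩
  · have := h.rank_covBy hc
    rw [hrec.1 hc, IH _ hle]
    congr 1
    omega
  · have := h.strictMono.monotone hle
    rw [hrec.2.2 hc, show ρ w - ρ u = ρ (MM w w) - ρ u + 1 by omega]
    simp [IH _ hle, pow_succ]
  · have := h.strictMono.monotone hle
    rw [hrec.2.1 hc, show ρ w - ρ u = ρ (MM w w) - ρ u + 1 by omega]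
    simp [IH _ hle, pow_succ]

theorem toLaurent_eq_neg_T_one_pow_mul_invert (h : IsRankedRefinement ρ MM)
    (hRq : IsRefinedKLR MM X Rq) (hRm : IsRefinedKLR MM (-1) Rm) {u w : P} (huw : u ≤ w) :
    toLaurent (Rq u w) = (-T 1) ^ (ρ w - ρ u) * invert (toLaurent (Rm u w)) := by
  have hT : (T 1 : ℤ[T;T⁻¹]) * T (-1) = 1 := by rw [← T_add]; norm_num
  refine h.le_induction (by simp [hRq.2.1, hRm.2.1]) (fun w hw u huw IH => ?_) huw
  have hρw := h.rank_covBy (h.isSPMOn w hw).2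
  have hq := hRq.2.2 w hw u huw
  have hm := hRm.2.2 w hw u huw
  rcases h.descent hw huw with ⟨hc, hle⟩ | ⟨hc, hle⟩ | ⟨hc, hle⟩
  · have := h.rank_covBy hc
    rw [hq.1 hc, hm.1 hc, IH _ hle]
    congr 2
    omega
  · have := h.strictMono.monotone hle
    rw [hq.2.2 hc, hm.2.2 hc, show ρ w - ρ u = ρ (MM w w) - ρ u + 1 by omega]
    simp only [map_mul, map_sub, map_neg, map_one, toLaurent_X, invert_T, IH u hle]
    linear_combination (-T 1) ^ (ρ (MM w w) - ρ u) * invert (toLaurent (Rm u (MM w w))) * hT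
  · have hρu := h.strictMono.monotone hle
    have hρMu := h.rank_covBy hc
    rw [hq.2.1 hc, hm.2.1 hc]
    by_cases hMu : MM w u ≤ MM w w
    · have := h.strictMono.monotone hMu
      rw [show ρ w - ρ u = ρ (MM w w) - ρ (MM w u) + 2 by omega]
      simp only [map_add, map_mul, map_sub, map_one, toLaurent_X, invert_T, IH u hle, IH _ hMu,
        show ρ (MM w w) - ρ u = ρ (MM w w) - ρ (MM w u) + 1 by omega]
      linear_combination (-T 1) ^ (ρ (MM w w) - ρ (MM w u)) *
        (-T 1 * invert (toLaurent (Rm u (MM w w))) -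
          T 1 * invert (toLaurent (Rm (MM w u) (MM w w)))) * hT
    · rw [hRq.1 _ _ hMu, hRm.1 _ _ hMu, show ρ w - ρ u = ρ (MM w w) - ρ u + 1 by omega]
      simp only [map_add, map_mul, map_sub, map_one, map_zero, toLaurent_X, invert_T, IH u hle]
      linear_combination (-T 1) ^ (ρ (MM w w) - ρ u) * invert (toLaurent (Rm u (MM w w))) * hT

end IsRankedRefinement

theorem LaurentPolynomial.eq_neg_T_one_pow_mul_invert_symm {R : Type*} [CommRing R]
    {f g : R[T;T⁻¹]} {n : ℕ} (h : f = (-T 1) ^ n * invert g) : g = (-T 1) ^ n * invert f := by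
  have hT : (-T 1 : R[T;T⁻¹]) * -T (-1) = 1 := by rw [neg_mul_neg, ← T_add]; norm_num
  rw [h, map_mul, map_pow, map_neg, invert_T, involutive_invert, ← mul_assoc, ← mul_pow, hT,
    one_pow, one_mul]

theorem refinedKLR_properties_general {P : Type*} [PartialOrder P] [OrderBot P]
    (ρ : P → ℕ) (hρcov : ∀ a b : P, a ⋖ b → ρ b = ρ a + 1)
    (hP : IsPircon P)
    (MM : P → P → P) (hMM : ∀ w : P, w ≠ ⊥ → IsSPMOn w (MM w))
    (Rq Rm : P → P → Polynomial ℤ)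
    (hRq : IsRefinedKLR MM X Rq) (hRm : IsRefinedKLR MM (-1) Rm)
    {u w : P} (huw : u ≤ w) :
    (Rm u w).degree = ((ρ w - ρ u : ℕ) : WithBot ℕ) ∧
    (Rq u w).eval 0 = (-1) ^ (ρ w - ρ u) ∧
    toLaurent (Rq u w) = (-T 1) ^ (ρ w - ρ u) * invert (toLaurent (Rm u w)) ∧
    toLaurent (Rm u w) = (-T 1) ^ (ρ w - ρ u) * invert (toLaurent (Rq u w)) := by
  have h : IsRankedRefinement ρ MM := ⟨hP.finite_Iic, hρcov _ _, hMM⟩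
  have hdual := h.toLaurent_eq_neg_T_one_pow_mul_invert hRq hRm huw
  exact ⟨h.degree_eq hRm huw, h.eval_zero_eq hRq huw, hdual,
    eq_neg_T_one_pow_mul_invert_symm hdual⟩

/-- Properties of the two families of Kazhdan--Lusztig `R`-polynomials of a refined pircon
`(P, 𝓜)`: (1) `deg R^{-1}_{u,w} = ρ(u,w)`; (2) `R^q_{u,w}(0) = (-1)^{ρ(u,w)}`;
(3) `R^x_{u,w}(q) = (-q)^{ρ(u,w)} · R^z_{u,w}(q⁻¹)` in `ℤ[q,q⁻¹]` for `{x,z} = {q,-1}`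
(the involution `q ↦ q⁻¹` of `ℤ[q,q⁻¹]` being `LaurentPolynomial.invert`). -/
theorem refinedKLR_properties {P : Type*} [PartialOrder P] [OrderBot P]
    (ρ : P → ℕ) (hρ0 : ρ (⊥ : P) = 0) (hρcov : ∀ a b : P, a ⋖ b → ρ b = ρ a + 1)
    (hP : IsPircon P)
    (MM : P → P → P) (hMM : ∀ w : P, w ≠ ⊥ → IsSPMOn w (MM w))
    (Rq Rm : P → P → Polynomial ℤ)
    (hRq : IsRefinedKLR MM X Rq) (hRm : IsRefinedKLR MM (-1) Rm)
    {u w : P} (huw : u ≤ w) :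
    (Rm u w).degree = ((ρ w - ρ u : ℕ) : WithBot ℕ) ∧
    (Rq u w).eval 0 = (-1) ^ (ρ w - ρ u) ∧
    toLaurent (Rq u w) = (-T 1) ^ (ρ w - ρ u) * invert (toLaurent (Rm u w)) ∧
    toLaurent (Rm u w) = (-T 1) ^ (ρ w - ρ u) * invert (toLaurent (Rq u w)) :=
  refinedKLR_properties_general ρ hρcov hP MM hMM Rq Rm hRq hRm huw
end

section
/- Let {x,z} = {q,−1} and let (R^q_{u,w}) and (R^{−1}_{u,w}) be the two families of Kazhdan–Lusztig R-polynomials of a pircon system (P,S) (both with respect to the same S). Then ι^x(j_P(m)) = j_P(ι^z(m)) for every m ∈ 𝓜_P. -/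
/-!
Both `ι^x ∘ j_P` and `j_P ∘ ι^z` act on `m_v` by coefficients built from `R^x_{u,v}(q)` and
`R^z_{u,v}(q⁻¹)` respectively, so the theorem reduces to the inversion formula
`R^x_{u,v}(q) = (-1)^{ρ(u)+ρ(v)} q^{ρ(u,v)} R^z_{u,v}(q⁻¹)`.  Its right-hand side satisfies the
recursion defining `R^x` because `x(q) = -q·z(q⁻¹)`, and that recursion on `ρ(v)` determines a
family once its values at `v = 0̂` are fixed.
-/

open Polynomial LaurentPolynomial

noncomputable section

/-- A quasi special partial matching of a poset `P`: an involution `M : P → P` such that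
for every `t`, either `M t ⋖ t`, `M t = t`, or `t ⋖ M t`, and whenever `t ⋖ u` and
`M t ≠ u`, then `M t < M u`. -/
def IsQSPM {P : Type*} [PartialOrder P] (M : P → P) : Prop :=
  Function.Involutive M ∧
  (∀ t : P, M t ⋖ t ∨ M t = t ∨ t ⋖ M t) ∧
  ∀ t u : P, t ⋖ u → M t ≠ u → M t < M u

/-- A pircon system `(P,S)`: `S` is a set of quasi special partial matchings of `P` such
that every `w ≠ ⊥` is matched downwards by some `M ∈ S`. -/
def IsPirconSystem {P : Type*} [PartialOrder P] [OrderBot P] (S : Set (P → P)) : Prop :=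
  (∀ M ∈ S, IsQSPM M) ∧ ∀ w : P, w ≠ ⊥ → ∃ M ∈ S, M w ⋖ w

/-- The defining properties of the family of Kazhdan--Lusztig `R^x`-polynomials of a
pircon system `(P,S)`, where `x ∈ {q,-1} ⊆ ℤ[q]` (here `q` is the variable `X`). -/
def IsKLRFamily {P : Type*} [PartialOrder P] (S : Set (P → P)) (x : Polynomial ℤ)
    (R : P → P → Polynomial ℤ) : Prop :=
  (∀ u w : P, ¬ u ≤ w → R u w = 0) ∧
  (∀ w : P, R w w = 1) ∧
  ∀ M ∈ S, ∀ u w : P, M w ⋖ w →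
    (M u ⋖ u → R u w = R (M u) (M w)) ∧
    (u ⋖ M u → R u w = (X - 1) * R u (M w) + X * R (M u) (M w)) ∧
    (M u = u → R u w = (X - 1 - x) * R u (M w))

/-- The up-down symmetry for a family of Kazhdan--Lusztig `R^x`-polynomials. -/
def UpDownSymmetry {P : Type*} [PartialOrder P] (S : Set (P → P)) (x : Polynomial ℤ)
    (R : P → P → Polynomial ℤ) : Prop :=
  ∀ M ∈ S, ∀ u w : P, u ⋖ M u →
    (w ⋖ M w → R u w = R (M u) (M w)) ∧
    (M w ⋖ w → R u w = (X - 1) * R (M u) w + X * R (M u) (M w)) ∧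
    (M w = w → R u w = (X - 1 - x) * R (M u) w)

/-!  The ring `A = ℤ[q^{1/2}, q^{-1/2}]` is realized as `LaurentPolynomial ℤ`, with
`q^{1/2} = T 1` and hence `q = T 2`; the bar involution `q^{1/2} ↦ q^{-1/2}` is
`LaurentPolynomial.invert`.  The free `A`-module `𝓜_P = ⊕_{u ∈ P} A·m_u` is realized as
the finitely supported elements of `P → A`, the basis element `m_u` corresponding to the
indicator of `u`. -/

/-- Evaluation of a polynomial in `q` at `q = T 2`, i.e. the inclusion
`ℤ[q] → ℤ[q^{1/2}, q^{-1/2}]`. -/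
def evq (p : Polynomial ℤ) : LaurentPolynomial ℤ :=
  Polynomial.aeval (T 2 : LaurentPolynomial ℤ) p

open Classical in
/-- The `y`-action of the operator `T_M` on `𝓜_P`, written in coordinates:
`T_M(m_v) = m_{M v}` if `v ⋖ M v`; `T_M(m_v) = q·m_{M v} + (q-1)·m_v` if `M v ⋖ v`;
and `T_M(m_v) = y·m_v` if `M v = v`. -/
def TMact {P : Type*} [PartialOrder P] (M : P → P) (y : LaurentPolynomial ℤ)
    (f : P → LaurentPolynomial ℤ) : P → LaurentPolynomial ℤ := fun u =>
  if M u = u then y * f u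
  else if M u < u then f (M u) + (T 2 - 1) * f u
  else T 2 * f (M u)

/-- The map `ι^x` on `𝓜_P`, written in coordinates:
`ι^x(Σ_v f_v·m_v) = Σ_v f̄_v·q^{-ρ(v)}·Σ_{u} (-1)^{ρ(u,v)}·R^x_{u,v}(q)·m_u`. -/
def iotaAct {P : Type*} [PartialOrder P] (ρ : P → ℕ) (R : P → P → Polynomial ℤ)
    (f : P → LaurentPolynomial ℤ) : P → LaurentPolynomial ℤ := fun u =>
  ∑ᶠ v : P, invert (f v) * (T (-2 * (ρ v : ℤ)) * ((-1) ^ (ρ v - ρ u) * evq (R u v)))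

/-- The involution `j_P` of `𝓜_P`: `j_P(a·m_w) = ā·(-q^{-1})^{ρ(w)}·m_w`. -/
def jPact {P : Type*} [PartialOrder P] (ρ : P → ℕ) (f : P → LaurentPolynomial ℤ) :
    P → LaurentPolynomial ℤ := fun w => invert (f w) * (-T (-2)) ^ (ρ w)

/-- `deg f < k/2`. -/
def DegLtHalf (f : Polynomial ℤ) (k : ℤ) : Prop :=
  f = 0 ∨ 2 * (f.natDegree : ℤ) < k

/-- The Kazhdan--Lusztig--Stanley polynomials of the kernel `(R_{u,w})`: `P_{u,w} = 0`
unless `u ≤ w`, `P_{w,w} = 1`, `deg P_{u,w} < ρ(u,w)/2` for `u < w`, and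
`q^{ρ(u,w)}·P_{u,w}(q⁻¹) = Σ_{u ≤ t ≤ w} R_{u,t}(q)·P_{t,w}(q)`. -/
def IsKLSFamily {P : Type*} [PartialOrder P] (ρ : P → ℕ)
    (R Pp : P → P → Polynomial ℤ) : Prop :=
  (∀ u w : P, ¬ u ≤ w → Pp u w = 0) ∧
  (∀ w : P, Pp w w = 1) ∧
  (∀ u w : P, u < w → DegLtHalf (Pp u w) ((ρ w : ℤ) - (ρ u : ℤ))) ∧
  ∀ u w : P, u ≤ w →
    T (2 * ((ρ w : ℤ) - (ρ u : ℤ))) * invert (evq (Pp u w)) =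
      ∑ᶠ t ∈ Set.Icc u w, evq (R u t) * evq (Pp t w)

/-- The Kazhdan--Lusztig element `C^x_w ∈ 𝓜_P`, in coordinates: its coefficient on `m_v`
is `q^{ρ(w)/2}·(-1)^{ρ(v,w)}·q^{-ρ(v)}·P^x_{v,w}(q^{-1})`. -/
def Cel {P : Type*} [PartialOrder P] (ρ : P → ℕ) (Pp : P → P → Polynomial ℤ) (w : P) :
    P → LaurentPolynomial ℤ := fun v =>
  T (ρ w : ℤ) * ((-1) ^ (ρ w - ρ v) * (T (-2 * (ρ v : ℤ)) * invert (evq (Pp v w))))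

/-- The Kazhdan--Lusztig element `C'^x_w ∈ 𝓜_P`, in coordinates: its coefficient on
`m_v` is `q^{-ρ(w)/2}·P^z_{v,w}(q)` (the family `Pp` fed here is `P^z`). -/
def Cel' {P : Type*} [PartialOrder P] (ρ : P → ℕ) (Pp : P → P → Polynomial ℤ) (w : P) :
    P → LaurentPolynomial ℤ := fun v =>
  T (-(ρ w : ℤ)) * evq (Pp v w)

theorem T_two_mul_T_neg_two : (T 2 : LaurentPolynomial ℤ) * T (-2) = 1 := by
  rw [← T_add, add_neg_cancel, T_zero]

theorem neg_T_pow (a : ℤ) (n : ℕ) : (-T a : LaurentPolynomial ℤ) ^ n = (-1) ^ n * T (a * n) := by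
  rw [neg_eq_neg_one_mul, mul_pow, T_pow, mul_comm (n : ℤ)]

theorem evq_eq_neg_T_two_mul_invert_evq {x z : Polynomial ℤ}
    (hxz : (x = X ∧ z = -1) ∨ (x = -1 ∧ z = X)) : evq x = -(T 2 * invert (evq z)) := by
  rcases hxz with ⟨rfl, rfl⟩ | ⟨rfl, rfl⟩
  · simp only [evq, map_neg, map_one, aeval_X, mul_neg, mul_one, neg_neg]
  · simp only [evq, map_neg, map_one, aeval_X, invert_T, T_two_mul_T_neg_two]

section KLRRecursion

variable {P : Type*} [PartialOrder P]

def SatisfiesKLRRecursion (S : Set (P → P)) (y : LaurentPolynomial ℤ)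
    (f : P → P → LaurentPolynomial ℤ) : Prop :=
  ∀ M ∈ S, ∀ u w : P, M w ⋖ w →
    (M u ⋖ u → f u w = f (M u) (M w)) ∧
    (u ⋖ M u → f u w = (T 2 - 1) * f u (M w) + T 2 * f (M u) (M w)) ∧
    (M u = u → f u w = (T 2 - 1 - y) * f u (M w))

theorem IsKLRFamily.satisfiesKLRRecursion_evq {S : Set (P → P)} {x : Polynomial ℤ}
    {R : P → P → Polynomial ℤ} (hR : IsKLRFamily S x R) :
    SatisfiesKLRRecursion S (evq x) fun u w => evq (R u w) := by
  intro M hM u w hMw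
  obtain ⟨hdown, hup, hfix⟩ := hR.2.2 M hM u w hMw
  refine ⟨fun h => congrArg evq (hdown h), fun h => ?_, fun h => ?_⟩
  · simp [hup h, evq]
  · simp [hfix h, evq]

theorem SatisfiesKLRRecursion.eq_of_forall_bot [OrderBot P] {ρ : P → ℕ}
    (hρcov : ∀ a b : P, a ⋖ b → ρ b = ρ a + 1) {S : Set (P → P)} (hS : IsPirconSystem S)
    {y : LaurentPolynomial ℤ} {f g : P → P → LaurentPolynomial ℤ}
    (hf : SatisfiesKLRRecursion S y f) (hg : SatisfiesKLRRecursion S y g)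
    (hbot : ∀ u, f u ⊥ = g u ⊥) : f = g := by
  suffices H : ∀ n, ∀ w, ρ w = n → ∀ u, f u w = g u w from
    funext fun u => funext fun w => H _ w rfl u
  intro n
  induction n using Nat.strong_induction_on with
  | _ n ih =>
    intro w hw u
    rcases eq_or_ne w ⊥ with rfl | hw_ne
    · exact hbot u
    obtain ⟨M, hM, hMw⟩ := hS.2 w hw_ne
    have ih' : ∀ u, f u (M w) = g u (M w) := ih _ (by have := hρcov _ _ hMw; omega) _ rfl
    obtain ⟨hf_down, hf_up, hf_fix⟩ := hf M hM u w hMw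
    obtain ⟨hg_down, hg_up, hg_fix⟩ := hg M hM u w hMw
    rcases (hS.1 M hM).2.1 u with h | h | h
    · rw [hf_down h, hg_down h, ih']
    · rw [hf_fix h, hg_fix h, ih']
    · rw [hf_up h, hg_up h, ih', ih']

/-- `(-1)^{ρ(u)+ρ(w)} q^{ρ(u,w)} R_{u,w}(q⁻¹)`. -/
def dualR (ρ : P → ℕ) (R : P → P → Polynomial ℤ) (u w : P) : LaurentPolynomial ℤ :=
  (-1) ^ (ρ u + ρ w) * T (2 * ρ w) * T (-2 * ρ u) * invert (evq (R u w))

theorem IsKLRFamily.satisfiesKLRRecursion_dualR {ρ : P → ℕ}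
    (hρcov : ∀ a b : P, a ⋖ b → ρ b = ρ a + 1) {S : Set (P → P)} {z : Polynomial ℤ}
    {R : P → P → Polynomial ℤ} (hR : IsKLRFamily S z R) :
    SatisfiesKLRRecursion S (-(T 2 * invert (evq z))) (dualR ρ R) := by
  intro M hM u w hMw
  obtain ⟨hdown, hup, hfix⟩ := hR.2.2 M hM u w hMw
  have hw : ρ w = ρ (M w) + 1 := hρcov _ _ hMw
  have hq := T_two_mul_T_neg_two
  refine ⟨fun h => ?_, fun h => ?_, fun h => ?_⟩ <;>
    simp only [dualR, hdown, hup, hfix, h, hw, evq, map_add, map_mul, map_sub, map_one, aeval_X,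
      invert_T, Nat.cast_add, Nat.cast_one, mul_add, mul_one, T_add, pow_succ, pow_add]
  · rw [hρcov _ _ h]
    simp only [Nat.cast_add, Nat.cast_one, mul_add, mul_one, T_add, pow_succ]
    linear_combination T (2 * ρ (M w)) * T (-2 * ρ (M u)) * invert (aeval (T 2) (R (M u) (M w))) *
      (-1) ^ ρ (M u) * (-1) ^ ρ (M w) * hq
  · rw [hρcov _ _ h]
    simp only [Nat.cast_add, Nat.cast_one, mul_add, mul_one, T_add, pow_succ]
    linear_combination -T (2 * ρ (M w)) * T (-2 * ρ u) * invert (aeval (T 2) (R u (M w))) *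
      (-1) ^ ρ u * (-1) ^ ρ (M w) * hq
  · linear_combination -T (2 * ρ (M w)) * T (-2 * ρ u) * invert (aeval (T 2) (R u (M w))) *
      (-1) ^ ρ u * (-1) ^ ρ (M w) * hq

theorem IsKLRFamily.evq_eq_dualR [OrderBot P] {ρ : P → ℕ}
    (hρcov : ∀ a b : P, a ⋖ b → ρ b = ρ a + 1) {S : Set (P → P)} (hS : IsPirconSystem S)
    {x z : Polynomial ℤ} (hxz : evq x = -(T 2 * invert (evq z)))
    {Rx Rz : P → P → Polynomial ℤ} (hRx : IsKLRFamily S x Rx) (hRz : IsKLRFamily S z Rz) :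
    (fun u w => evq (Rx u w)) = dualR ρ Rz := by
  refine hRx.satisfiesKLRRecursion_evq.eq_of_forall_bot hρcov hS ?_ fun u => ?_
  · simpa only [hxz] using hRz.satisfiesKLRRecursion_dualR hρcov
  rcases eq_or_ne u ⊥ with rfl | hu
  · rw [dualR, hRx.2.1, hRz.2.1, evq, map_one, map_one, mul_one, mul_assoc, ← T_add, ← two_mul,
      pow_mul]
    norm_num
  · have hu' : ¬ u ≤ ⊥ := fun h => hu (le_bot_iff.mp h)
    simp only [dualR, hRx.1 u ⊥ hu', hRz.1 u ⊥ hu', evq, map_zero, mul_zero]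

end KLRRecursion

theorem iota_jP_conj_general {P : Type*} [PartialOrder P] [OrderBot P]
    (ρ : P → ℕ) (hρcov : ∀ a b : P, a ⋖ b → ρ b = ρ a + 1)
    {S : Set (P → P)} (hS : IsPirconSystem S)
    {x z : Polynomial ℤ} (hxz : (x = X ∧ z = -1) ∨ (x = -1 ∧ z = X))
    {Rx Rz : P → P → Polynomial ℤ}
    (hRx : IsKLRFamily S x Rx) (hRz : IsKLRFamily S z Rz)
    (m : P → LaurentPolynomial ℤ) :
    iotaAct ρ Rx (jPact ρ m) = jPact ρ (iotaAct ρ Rz m) := by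
  have hR := hRx.evq_eq_dualR hρcov hS (evq_eq_neg_T_two_mul_invert_evq hxz) hRz
  funext u
  simp only [iotaAct, jPact]
  rw [AddEquivClass.map_finsum, finsum_mul]
  refine finsum_congr fun v => ?_
  have hT : (T (2 * ρ v) : LaurentPolynomial ℤ) * T (-(2 * ρ v)) = 1 := by
    rw [← T_add, add_neg_cancel, T_zero]
  have hsign : ((-1 : LaurentPolynomial ℤ)) ^ (ρ v + ρ v) = 1 := by
    rw [← two_mul, pow_mul]; norm_num
  rw [congrFun₂ hR u v, dualR]
  simp only [map_mul, map_pow, map_neg, map_one, invert_T, neg_mul, neg_neg,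
    involutive_invert (m v), neg_T_pow]
  set c := m v * T (2 * ρ v) * T (-(2 * ρ u)) * invert (evq (Rz u v)) * (-1) ^ (ρ v - ρ u) *
    (-1) ^ ρ u
  linear_combination c * (-1) ^ (ρ v + ρ v) * hT + c * hsign

/-- The maps `ι^x` and `ι^z` are conjugated by `j_P`: `ι^x ∘ j_P = j_P ∘ ι^z`, where
`{x,z} = {q,-1}` and `(R^x)`, `(R^z)` are the two families of Kazhdan--Lusztig
`R`-polynomials of the pircon system `(P,S)`. -/
theorem iota_jP_conj {P : Type*} [PartialOrder P] [OrderBot P]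
    (ρ : P → ℕ) (hρ0 : ρ (⊥ : P) = 0) (hρcov : ∀ a b : P, a ⋖ b → ρ b = ρ a + 1)
    (hP : IsPircon P) {S : Set (P → P)} (hS : IsPirconSystem S)
    {x z : Polynomial ℤ} (hxz : (x = X ∧ z = -1) ∨ (x = -1 ∧ z = X))
    {Rx Rz : P → P → Polynomial ℤ}
    (hRx : IsKLRFamily S x Rx) (hRz : IsKLRFamily S z Rz)
    (m : P → LaurentPolynomial ℤ) (hm : (Function.support m).Finite) :
    iotaAct ρ Rx (jPact ρ m) = jPact ρ (iotaAct ρ Rz m) :=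
  iota_jP_conj_general ρ hρcov hS hxz hRx hRz m

end
end
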